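/- arXiv:2107.05193 — 3 statements merged into one kernel-verified Lean document; each statement's English description precedes it below -/
import Mathlib

section
/- For θ ∈ ℝ let R(θ) denote the 2×2 rotation matrix [[cos θ, −sin θ], [sin θ, cos θ]]. There exist θ₁, θ₂ ∈ ℝ, a₁, a₂ > 0 and v ∈ ℝ² such that a₁⁻¹ • (R(θ₁)ᵀ ⬝ v) ≠ a₂⁻¹ • (R(θ₂)ᵀ ⬝ v); consequently there is no single w ∈ ℝ² satisfying w = aᵢ⁻¹ • (R(θᵢ)ᵀ ⬝ v) for both i = 1, 2, so the two-landmark ego-centric SLAM system with common velocity input is not equivariant under the group (S¹ × ℝ_{>0})² without extending the velocity space. -/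
open Matrix

/-- The 2×2 rotation matrix `R(θ)`. -/
noncomputable def Rot (θ : ℝ) : Matrix (Fin 2) (Fin 2) ℝ :=
  !![Real.cos θ, -Real.sin θ; Real.sin θ, Real.cos θ]

/-- there exist group elements `(θ₁, a₁), (θ₂, a₂)` and a velocity `v ∈ ℝ²`
such that `a₁⁻¹ • (R(θ₁)ᵀ ⬝ v) ≠ a₂⁻¹ • (R(θ₂)ᵀ ⬝ v)`; consequently no single `w ∈ ℝ²`
satisfies `w = aᵢ⁻¹ • (R(θᵢ)ᵀ ⬝ v)` for both `i = 1, 2`, so the two-landmark ego-centric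
SLAM system with common velocity input is not equivariant under `(S¹ × ℝ_{>0})²` without
extending the velocity space. -/
theorem slam2d_not_equivariant :
    ∃ (θ₁ θ₂ a₁ a₂ : ℝ) (v : Fin 2 → ℝ), 0 < a₁ ∧ 0 < a₂ ∧
      a₁⁻¹ • ((Rot θ₁)ᵀ *ᵥ v) ≠ a₂⁻¹ • ((Rot θ₂)ᵀ *ᵥ v) ∧
      ¬ ∃ w : Fin 2 → ℝ,
          w = a₁⁻¹ • ((Rot θ₁)ᵀ *ᵥ v) ∧ w = a₂⁻¹ • ((Rot θ₂)ᵀ *ᵥ v) := by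
  refine ⟨0, 0, 1, 2, ![1, 0], one_pos, two_pos, ?_, ?_⟩
  · intro h
    have := congrFun h 0
    simp [Rot, mulVec, dotProduct, Fin.sum_univ_two] at this
  · rintro ⟨w, h1, h2⟩
    have := congrFun (h1.symm.trans h2) 0
    simp [Rot, mulVec, dotProduct, Fin.sum_univ_two] at this
end

section
/- (Error dynamics for the ego-centric SLAM example.) Let R(θ) = [[cos θ, −sin θ], [sin θ, cos θ]] and S = [[0, −1], [1, 0]]. Fix an origin x° ∈ ℝ² with x° ≠ 0. Let v : ℝ → ℝ² be continuous, and let x : ℝ → ℝ², θ̂ : ℝ → ℝ, â : ℝ → ℝ be differentiable with â(t) > 0 and x(t) ≠ 0 for all t, satisfying the true kinematics x'(t) = v(t) and the lifted observer kinematics θ̂'(t) = x̂(t)ᵀ(S⬝v(t)) / (x̂(t)ᵀx̂(t)) and â'(t) = −â(t) · x̂(t)ᵀv(t) / (x̂(t)ᵀx̂(t)), where x̂(t) := â(t)⁻¹ • (R(θ̂(t))ᵀ ⬝ x°). Define the global error e(t) := â(t) • (R(θ̂(t)) ⬝ x(t)) and the origin velocity v°(t) := â(t) • (R(θ̂(t))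 ⬝ v(t)). Then for every t, e is differentiable at t with e'(t) = ( e(t)ᵀ(S⬝v°(t))/(e(t)ᵀe(t)) − x°ᵀ(S⬝v°(t))/(x°ᵀx°) ) • (Sᵀ ⬝ e(t)) + ( e(t)ᵀv°(t)/(e(t)ᵀe(t)) − x°ᵀv°(t)/(x°ᵀx°) ) • e(t); that is, the error dynamics depend only on e and v°, taking the form ė = Dφ_e(id)[Λ(e, v°) − Λ(x°, v°)] with Λ(x, v) = (xᵀ(S⬝v)/(xᵀx), −xᵀv/(xᵀx)). -/
/-!
Since `R(θ) = cos θ • 1 + sin θ • S` with `S² = -1`, one has `d/dθ (R(θ) u) = S (R(θ) u)`, so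
`ė = (â'/â) • e + θ̂' • S e + v°`. Because `R(θ̂)` is orthogonal and commutes with `S`, the
observer rates expressed through `x̂` become `θ̂' = x°ᵀSv°/|x°|²` and `â'/â = -x°ᵀv°/|x°|²`.
Finally `e` and `Sᵀe` form an orthogonal basis of the plane with equal norms, so
`v° = (eᵀSv°/|e|²) • Sᵀe + (eᵀv°/|e|²) • e`, and `Sᵀ = -S` turns the rotational term into the
required one.
-/

open Matrix

/-- The matrix `S = [[0,−1],[1,0]]`. -/
def Smat : Matrix (Fin 2) (Fin 2) ℝ := !![0, -1; 1, 0]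

theorem HasDerivAt.const_mulVec {m n : Type*} [Fintype m] [Fintype n] (A : Matrix m n ℝ)
    {u : ℝ → n → ℝ} {u' : n → ℝ} {t : ℝ} (hu : HasDerivAt u u' t) :
    HasDerivAt (fun τ => A *ᵥ u τ) (A *ᵥ u') t :=
  (mulVecLin A).toContinuousLinearMap.hasFDerivAt.comp_hasDerivAt t hu

theorem div_dotProduct_orthogonal {n : Type*} [Fintype n] [DecidableEq n] {Q : Matrix n n ℝ}
    (hQ : Q * Qᵀ = 1) {c : ℝ} (hc : c ≠ 0) (u w : n → ℝ) :
    (c • (Qᵀ *ᵥ u)) ⬝ᵥ w / ((c • (Qᵀ *ᵥ u)) ⬝ᵥ (c • (Qᵀ *ᵥ u)))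
      = u ⬝ᵥ (c⁻¹ • (Q *ᵥ w)) / (u ⬝ᵥ u) := by
  have hadj (z : n → ℝ) : (Qᵀ *ᵥ u) ⬝ᵥ z = u ⬝ᵥ (Q *ᵥ z) := by
    rw [mulVec_transpose, dotProduct_mulVec]
  simp only [smul_dotProduct, dotProduct_smul, hadj, mulVec_mulVec, hQ, one_mulVec, smul_eq_mul]
  field_simp

theorem Smat_transpose : Smatᵀ = -Smat := by
  ext i j; fin_cases i <;> fin_cases j <;> simp [Smat]

theorem Smat_mulVec (u : Fin 2 → ℝ) : Smat *ᵥ u = ![-u 1, u 0] := by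
  ext i; fin_cases i <;> simp [Smat, mulVec, dotProduct]

theorem Smat_mulVec_Smat_mulVec (u : Fin 2 → ℝ) : Smat *ᵥ (Smat *ᵥ u) = -u := by
  rw [Smat_mulVec, Smat_mulVec]
  ext i; fin_cases i <;> simp

theorem eq_smul_Smat_transpose_add_smul {e : Fin 2 → ℝ} (he : e ≠ 0) (w : Fin 2 → ℝ) :
    w = (e ⬝ᵥ (Smat *ᵥ w) / (e ⬝ᵥ e)) • (Smatᵀ *ᵥ e) + (e ⬝ᵥ w / (e ⬝ᵥ e)) • e := by
  have hee : e 0 ^ 2 + e 1 ^ 2 ≠ 0 := by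
    simpa [dotProduct, ← sq] using mt dotProduct_self_eq_zero.mp he
  rw [Smat_transpose, neg_mulVec, Smat_mulVec, Smat_mulVec]
  ext i; fin_cases i <;> simp [dotProduct, ← sq] <;> field_simp <;> ring

theorem Rot_mulVec (θ : ℝ) (u : Fin 2 → ℝ) :
    Rot θ *ᵥ u = Real.cos θ • u + Real.sin θ • (Smat *ᵥ u) := by
  rw [Smat_mulVec]
  ext i; fin_cases i <;> simp [Rot, mulVec, dotProduct]; ring

theorem Rot_mulVec_Smat_mulVec (θ : ℝ) (u : Fin 2 → ℝ) :
    Rot θ *ᵥ (Smat *ᵥ u) = Smat *ᵥ (Rot θ *ᵥ u) := by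
  simp only [Rot_mulVec, mulVec_add, mulVec_smul]

theorem Rot_mul_transpose (θ : ℝ) : Rot θ * (Rot θ)ᵀ = 1 := by
  ext i j; fin_cases i <;> fin_cases j <;> simp [Rot, mul_apply, ← sq, mul_comm]

theorem Rot_mulVec_ne_zero (θ : ℝ) {u : Fin 2 → ℝ} (hu : u ≠ 0) : Rot θ *ᵥ u ≠ 0 := by
  intro h
  have hinv : (Rot θ)ᵀ *ᵥ (Rot θ *ᵥ u) = u := by
    rw [mulVec_mulVec, mul_eq_one_comm.mp (Rot_mul_transpose θ), one_mulVec]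
  exact hu (by rw [← hinv, h, mulVec_zero])

theorem hasDerivAt_Rot_mulVec {θ : ℝ → ℝ} {u : ℝ → Fin 2 → ℝ} {θ' : ℝ} {u' : Fin 2 → ℝ}
    {t : ℝ} (hθ : HasDerivAt θ θ' t) (hu : HasDerivAt u u' t) :
    HasDerivAt (fun τ => Rot (θ τ) *ᵥ u τ)
      (θ' • (Smat *ᵥ (Rot (θ t) *ᵥ u t)) + Rot (θ t) *ᵥ u') t := by
  have hR : (fun τ => Rot (θ τ) *ᵥ u τ)
      = (fun τ => Real.cos (θ τ)) • u + (fun τ => Real.sin (θ τ)) • fun τ => Smat *ᵥ u τ :=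
    funext fun τ => Rot_mulVec _ _
  rw [hR]
  refine ((hθ.cos.smul hu).add (hθ.sin.smul (hu.const_mulVec Smat))).congr_deriv ?_
  simp only [Rot_mulVec, mulVec_add, mulVec_smul, Smat_mulVec_Smat_mulVec]
  module

theorem slam2d_error_dynamics_general
    (xo : Fin 2 → ℝ)
    (v : ℝ → (Fin 2 → ℝ))
    (x : ℝ → (Fin 2 → ℝ)) (θhat ahat : ℝ → ℝ)
    (ha : ∀ t, 0 < ahat t) (hx : ∀ t, x t ≠ 0)
    (hxdot : ∀ t, HasDerivAt x (v t) t)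
    (hθdot : ∀ t, HasDerivAt θhat
      ((((ahat t)⁻¹ • ((Rot (θhat t))ᵀ *ᵥ xo)) ⬝ᵥ (Smat *ᵥ v t))
        / (((ahat t)⁻¹ • ((Rot (θhat t))ᵀ *ᵥ xo)) ⬝ᵥ ((ahat t)⁻¹ • ((Rot (θhat t))ᵀ *ᵥ xo)))) t)
    (hadot : ∀ t, HasDerivAt ahat
      (-(ahat t) * ((((ahat t)⁻¹ • ((Rot (θhat t))ᵀ *ᵥ xo)) ⬝ᵥ v t)
        / (((ahat t)⁻¹ • ((Rot (θhat t))ᵀ *ᵥ xo)) ⬝ᵥ ((ahat t)⁻¹ • ((Rot (θhat t))ᵀ *ᵥ xo))))) t)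
    (e vo : ℝ → (Fin 2 → ℝ))
    (he : ∀ t, e t = ahat t • (Rot (θhat t) *ᵥ x t))
    (hvo : ∀ t, vo t = ahat t • (Rot (θhat t) *ᵥ v t)) :
    ∀ t, HasDerivAt e
      ((e t ⬝ᵥ (Smat *ᵥ vo t) / (e t ⬝ᵥ e t) - xo ⬝ᵥ (Smat *ᵥ vo t) / (xo ⬝ᵥ xo))
          • (Smatᵀ *ᵥ e t)
        + (e t ⬝ᵥ vo t / (e t ⬝ᵥ e t) - xo ⬝ᵥ vo t / (xo ⬝ᵥ xo)) • e t) t := by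
  intro t
  have ha0 : ahat t ≠ 0 := (ha t).ne'
  have hQ := Rot_mul_transpose (θhat t)
  have hE := (hadot t).smul (hasDerivAt_Rot_mulVec (hθdot t) (hxdot t))
  set xhat := (ahat t)⁻¹ • ((Rot (θhat t))ᵀ *ᵥ xo)
  have hθrate : xhat ⬝ᵥ (Smat *ᵥ v t) / (xhat ⬝ᵥ xhat) = xo ⬝ᵥ (Smat *ᵥ vo t) / (xo ⬝ᵥ xo) := by
    rw [div_dotProduct_orthogonal hQ (inv_ne_zero ha0), inv_inv, Rot_mulVec_Smat_mulVec,
      ← mulVec_smul, ← hvo]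
  have harate : xhat ⬝ᵥ v t / (xhat ⬝ᵥ xhat) = xo ⬝ᵥ vo t / (xo ⬝ᵥ xo) := by
    rw [div_dotProduct_orthogonal hQ (inv_ne_zero ha0), inv_inv, ← hvo]
  rw [hθrate, harate] at hE
  refine (hE.congr_deriv ?_).congr_of_eventuallyEq (Filter.Eventually.of_forall he)
  have he0 : e t ≠ 0 := by
    rw [he t]
    exact smul_ne_zero ha0 (Rot_mulVec_ne_zero (θhat t) (hx t))
  have hdec := eq_smul_Smat_transpose_add_smul he0 (vo t)
  rw [Smat_transpose, neg_mulVec] at hdec ⊢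
  rw [he t, hvo t] at hdec ⊢
  simp only [mulVec_smul] at hdec ⊢
  linear_combination (norm := module) hdec

/-- error dynamics for the ego-centric SLAM example: with origin
`x° ≠ 0`, true kinematics `x' = v`, lifted observer kinematics for `(θ̂, â)` driven by
the estimate `x̂ = â⁻¹ • (R(θ̂)ᵀ⬝x°)`, global error `e = â • (R(θ̂)⬝x)` and origin
velocity `v° = â • (R(θ̂)⬝v)`, the error satisfies
`ė = (eᵀ(S⬝v°)/(eᵀe) − x°ᵀ(S⬝v°)/(x°ᵀx°)) • (Sᵀ⬝e) + (eᵀv°/(eᵀe) − x°ᵀv°/(x°ᵀx°)) • e`,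
i.e. `ė = Dφ_e(id)[Λ(e, v°) − Λ(x°, v°)]`, depending only on `e` and `v°`. -/
theorem slam2d_error_dynamics
    (xo : Fin 2 → ℝ) (hxo : xo ≠ 0)
    (v : ℝ → (Fin 2 → ℝ)) (hv : Continuous v)
    (x : ℝ → (Fin 2 → ℝ)) (θhat ahat : ℝ → ℝ)
    (ha : ∀ t, 0 < ahat t) (hx : ∀ t, x t ≠ 0)
    (hxdot : ∀ t, HasDerivAt x (v t) t)
    (hθdot : ∀ t, HasDerivAt θhat
      ((((ahat t)⁻¹ • ((Rot (θhat t))ᵀ *ᵥ xo)) ⬝ᵥ (Smat *ᵥ v t))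
        / (((ahat t)⁻¹ • ((Rot (θhat t))ᵀ *ᵥ xo)) ⬝ᵥ ((ahat t)⁻¹ • ((Rot (θhat t))ᵀ *ᵥ xo)))) t)
    (hadot : ∀ t, HasDerivAt ahat
      (-(ahat t) * ((((ahat t)⁻¹ • ((Rot (θhat t))ᵀ *ᵥ xo)) ⬝ᵥ v t)
        / (((ahat t)⁻¹ • ((Rot (θhat t))ᵀ *ᵥ xo)) ⬝ᵥ ((ahat t)⁻¹ • ((Rot (θhat t))ᵀ *ᵥ xo))))) t)
    (e vo : ℝ → (Fin 2 → ℝ))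
    (he : ∀ t, e t = ahat t • (Rot (θhat t) *ᵥ x t))
    (hvo : ∀ t, vo t = ahat t • (Rot (θhat t) *ᵥ v t)) :
    ∀ t, HasDerivAt e
      ((e t ⬝ᵥ (Smat *ᵥ vo t) / (e t ⬝ᵥ e t) - xo ⬝ᵥ (Smat *ᵥ vo t) / (xo ⬝ᵥ xo))
          • (Smatᵀ *ᵥ e t)
        + (e t ⬝ᵥ vo t / (e t ⬝ᵥ e t) - xo ⬝ᵥ vo t / (xo ⬝ᵥ xo)) • e t) t :=
  slam2d_error_dynamics_general xo v x θhat ahat ha hx hxdot hθdot hadot e vo he hvo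
end

section
/- (Linearised error state matrix of the EqF example.) Let S = [[0, −1], [1, 0]], fix x° ∈ ℝ² with x° ≠ 0 and v° ∈ ℝ², and define g : ℝ² ∖ {0} → ℝ² by g(e) = ( eᵀ(S⬝v°)/(eᵀe) − x°ᵀ(S⬝v°)/(x°ᵀx°) ) • (Sᵀ⬝e) + ( eᵀv°/(eᵀe) − x°ᵀv°/(x°ᵀx°) ) • e. Then g is Fréchet differentiable at x° and its derivative is the linear map given by the matrix A = (1/‖x°‖⁴) · ( ‖x°‖²( −(S⬝x°)(S⬝v°)ᵀ + x°v°ᵀ ) + 2 (x°ᵀ(S⬝v°)) (S⬝x°)x°ᵀ − 2 (x°ᵀv°) x°x°ᵀ ), where ‖x°‖² = x°ᵀx° and u wᵀ denotes the outer product matrix. -/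
/-!
Both scalar coefficients of the error drift vanish at `x°`, so in the product rule only their
derivatives survive, multiplied by `Sᵀx° = -Sx°` and `x°` respectively. By the quotient rule,
`e ↦ eᵀw / eᵀe` has derivative `u ↦ uᵀw / ‖x°‖² - 2 (x°ᵀw)(x°ᵀu) / ‖x°‖⁴` at `x°`; substituting
`w = S v°` and `w = v°` and expanding the outer products gives `A u`.
-/

open Matrix

theorem HasFDerivAt.smul_of_eq_zero {𝕜 E F : Type*} [NontriviallyNormedField 𝕜]
    [NormedAddCommGroup E] [NormedSpace 𝕜 E] [NormedAddCommGroup F] [NormedSpace 𝕜 F]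
    {c : E → 𝕜} {c' : E →L[𝕜] 𝕜} {f : E → F} {f' : E →L[𝕜] F} {x : E}
    (hc : HasFDerivAt c c' x) (hf : HasFDerivAt f f' x) (hcx : c x = 0) :
    HasFDerivAt (fun y => c y • f y) (c'.smulRight (f x)) x := by
  simpa [hcx] using hc.fun_smul hf

section DotProduct

variable {ι : Type*} [Fintype ι]

noncomputable def dotProductCLM (w : ι → ℝ) : (ι → ℝ) →L[ℝ] ℝ :=
  LinearMap.toContinuousLinearMap ((dotProductBilin ℝ ℝ).flip w)

@[simp]
theorem dotProductCLM_apply (w e : ι → ℝ) : dotProductCLM w e = e ⬝ᵥ w := rfl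

theorem hasFDerivAt_dotProduct_right (w x : ι → ℝ) :
    HasFDerivAt (fun e : ι → ℝ => e ⬝ᵥ w) (dotProductCLM w) x :=
  (dotProductCLM w).hasFDerivAt

theorem hasFDerivAt_dotProduct_self (x : ι → ℝ) :
    HasFDerivAt (fun e : ι → ℝ => e ⬝ᵥ e) (2 • dotProductCLM x) x := by
  have hsum := HasFDerivAt.fun_sum (u := Finset.univ) fun i _ =>
    (hasFDerivAt_apply (𝕜 := ℝ) i x).mul (hasFDerivAt_apply i x)
  refine hsum.congr_fderiv (ContinuousLinearMap.ext fun u => ?_)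
  simp [dotProduct, Finset.sum_add_distrib, two_smul, mul_comm]

theorem hasFDerivAt_dotProduct_div_dotProduct_self (w : ι → ℝ) {x : ι → ℝ}
    (hx : x ⬝ᵥ x ≠ 0) :
    HasFDerivAt (fun e : ι → ℝ => e ⬝ᵥ w / (e ⬝ᵥ e))
      ((x ⬝ᵥ x)⁻¹ • dotProductCLM w - (2 * (x ⬝ᵥ w) / (x ⬝ᵥ x) ^ 2) • dotProductCLM x) x := by
  have hinv := (hasDerivAt_inv hx).comp_hasFDerivAt (f := fun e : ι → ℝ => e ⬝ᵥ e) x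
    (hasFDerivAt_dotProduct_self x)
  simp only [div_eq_mul_inv]
  refine ((hasFDerivAt_dotProduct_right w x).fun_mul hinv).congr_fderiv
    (ContinuousLinearMap.ext fun u => ?_)
  simp only [neg_smul, smul_neg, Function.comp_apply, _root_.add_apply, _root_.neg_apply,
    _root_.smul_apply, _root_.sub_apply, dotProductCLM_apply, nsmul_eq_mul, Nat.cast_ofNat,
    smul_eq_mul]
  ring

end DotProduct

/-- linearised error state matrix of the EqF example: the error drift
`g(e) = (eᵀ(S⬝v°)/(eᵀe) − x°ᵀ(S⬝v°)/(x°ᵀx°)) • (Sᵀ⬝e) + (eᵀv°/(eᵀe) − x°ᵀv°/(x°ᵀx°)) • e`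
is Fréchet differentiable at the origin `x° ≠ 0`, with derivative given by the matrix
`A = (1/‖x°‖⁴)(‖x°‖²(−(S⬝x°)(S⬝v°)ᵀ + x°v°ᵀ) + 2(x°ᵀ(S⬝v°))(S⬝x°)x°ᵀ − 2(x°ᵀv°)x°x°ᵀ)`,
where `‖x°‖² = x°ᵀx°`. -/
theorem slam2d_linearised_state_matrix
    (xo : Fin 2 → ℝ) (hxo : xo ≠ 0) (vo : Fin 2 → ℝ) :
    ∃ L : (Fin 2 → ℝ) →L[ℝ] (Fin 2 → ℝ),
      HasFDerivAt
        (fun e : Fin 2 → ℝ =>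
          (e ⬝ᵥ (Smat *ᵥ vo) / (e ⬝ᵥ e) - xo ⬝ᵥ (Smat *ᵥ vo) / (xo ⬝ᵥ xo)) • (Smatᵀ *ᵥ e)
            + (e ⬝ᵥ vo / (e ⬝ᵥ e) - xo ⬝ᵥ vo / (xo ⬝ᵥ xo)) • e)
        L xo
      ∧ ∀ u : Fin 2 → ℝ,
          L u = (((xo ⬝ᵥ xo) ^ 2)⁻¹ •
            ((xo ⬝ᵥ xo) • (-(vecMulVec (Smat *ᵥ xo) (Smat *ᵥ vo)) + vecMulVec xo vo)
              + (2 * (xo ⬝ᵥ (Smat *ᵥ vo))) • vecMulVec (Smat *ᵥ xo) xo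
              - (2 * (xo ⬝ᵥ vo)) • vecMulVec xo xo)) *ᵥ u := by
  have hq : xo ⬝ᵥ xo ≠ 0 := by rwa [Ne, dotProduct_self_eq_zero]
  have hcoeff (w : Fin 2 → ℝ) :=
    (hasFDerivAt_dotProduct_div_dotProduct_self w hq).sub_const (xo ⬝ᵥ w / (xo ⬝ᵥ xo))
  have hSt := (Smatᵀ.mulVecLin.toContinuousLinearMap).hasFDerivAt (x := xo)
  refine ⟨_, ((hcoeff _).smul_of_eq_zero hSt (sub_self _)).add
    ((hcoeff vo).smul_of_eq_zero (hasFDerivAt_id xo) (sub_self _)), fun u => ?_⟩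
  simp only [_root_.add_apply, ContinuousLinearMap.smulRight_apply, _root_.sub_apply,
    _root_.smul_apply, dotProductCLM_apply, LinearMap.coe_toContinuousLinearMap', mulVecLin_apply,
    smul_eq_mul, Smat_transpose, neg_mulVec, add_mulVec, sub_mulVec, smul_mulVec,
    vecMulVec_mulVec, op_smul_eq_smul, dotProduct_comm u]
  match_scalars
  · field_simp
    ring
  · field_simp
end
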